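/- arXiv:2407.19974 — 4 statements merged into one kernel-verified Lean document; each statement's English description precedes it below -/
import Mathlib

section
/- Let L/ℚ be an algebraic field extension, O an order in L, and let n ≥ 1, m ≥ 2 be integers. Let f ∈ L[x₁,…,xₙ] be a homogeneous polynomial of degree m and Λ ⊆ Lⁿ a finitely generated O-submodule with f(v) ∈ O for all v ∈ Λ. Then there exist a number field K with K ⊆ L such that the fraction field of O ∩ O_K equals K, and a finitely generated (O ∩ O_K)-submodule Λ₀ ⊆ Λ such that f(w) ∈ O ∩ O_K for all w ∈ Λ₀ and Λ equals the O-span of Λ₀ inside Lⁿ. -/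
/-!
Write `Λ` as the `O`-span of finitely many vectors `v i` and let `K` be the field generated by
the coefficients of the polynomial `f (∑ i, tᵢ vᵢ)` in the `tᵢ`. Then `f` takes values in `K` on
every combination of the `v i` with coefficients in `K`, so `Λ₀`, the `O ∩ 𝓞 K`-span of the `v i`,
does the job. The fraction field of `O ∩ 𝓞 K` is `K` because every nonzero `b ∈ O` divides, in
`O`, the nonzero integer `(minpoly ℤ b).coeff 0`: thus `x = a / b` can be rewritten with an integer
denominator, and its numerator then lies in `K`.
-/

open MvPolynomial

open Polynomial in
theorem exists_intCast_eq_mul_of_isIntegral {L : Type*} [Field L] [CharZero L] {b : L}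
    (hb : IsIntegral ℤ b) (hb0 : b ≠ 0) :
    ∃ c : ℤ, c ≠ 0 ∧ ∃ s ∈ Algebra.adjoin ℤ {b}, (c : L) = b * s := by
  have hcoeff : (minpoly ℤ b).coeff 0 ≠ 0 := by
    have := minpoly.coeff_zero_ne_zero (hb.tower_top (A := ℚ)) hb0
    rw [minpoly.isIntegrallyClosed_eq_field_fractions' ℚ hb, Polynomial.coeff_map] at this
    exact fun h => this (by simp [h])
  refine ⟨-(minpoly ℤ b).coeff 0, neg_ne_zero.2 hcoeff, aeval b (minpoly ℤ b).divX,
    aeval_mem_adjoin_singleton ℤ b, ?_⟩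
  have h := minpoly.aeval ℤ b
  rw [← X_mul_divX_add (minpoly ℤ b)] at h
  simp only [map_add, map_mul, Polynomial.aeval_X, eq_intCast, map_intCast] at h
  push_cast
  linear_combination -h

namespace MvPolynomial

/-- `f (∑ i, X i • v i)`, a polynomial in the coefficients of a linear combination of the `v i`. -/
noncomputable def compLinearCombination {R σ ι : Type*} [CommRing R] [Fintype ι]
    (f : MvPolynomial σ R) (v : ι → σ → R) : MvPolynomial ι R :=
  aeval (fun j => ∑ i, C (v i j) * X i) f

theorem eval_compLinearCombination {R σ ι : Type*} [CommRing R] [Fintype ι]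
    (f : MvPolynomial σ R) (v : ι → σ → R) (c : ι → R) :
    eval c (f.compLinearCombination v) = eval (∑ i, c i • v i) f := by
  symm
  rw [← coe_aeval_eq_eval, ← coe_aeval_eq_eval]
  change aeval _ f = ((aeval c).comp (aeval _)) f
  rw [comp_aeval]
  congr 2 with j
  simp [mul_comm]

theorem eval_sum_smul_mem_adjoin_coeffs {F L σ ι : Type*} [Field F] [Field L] [Algebra F L]
    [Fintype ι] (f : MvPolynomial σ L) (v : ι → σ → L) {c : ι → L}
    (hc : ∀ i, c i ∈ IntermediateField.adjoin F ((f.compLinearCombination v).coeffs : Set L)) :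
    eval (∑ i, c i • v i) f ∈
      IntermediateField.adjoin F ((f.compLinearCombination v).coeffs : Set L) := by
  rw [← eval_compLinearCombination]
  exact eval_mem (fun d hd => IntermediateField.subset_adjoin F _ (coeff_mem_coeffs d
    (mem_support_iff.1 hd))) hc

end MvPolynomial

theorem Submodule.span_subset_span_of_subalgebra_le {R L M : Type*} [CommRing R] [CommRing L]
    [Algebra R L] [AddCommMonoid M] [Module L M] {A B : Subalgebra R L} (h : A ≤ B) (s : Set M) :
    (span A s : Set M) ⊆ span B s := by
  intro x hx
  induction hx using Submodule.span_induction with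
  | mem x hx => exact subset_span hx
  | zero => exact zero_mem _
  | add x y _ _ hx hy => exact add_mem hx hy
  | smul a x _ hx => exact smul_mem _ (⟨a, h a.2⟩ : B) hx

section Order

variable {L : Type*} [Field L] [CharZero L]

/-- The ring `O ∩ 𝓞 K`. -/
abbrev restrictOrder (O : Subalgebra ℤ L) (K : IntermediateField ℚ L) : Subalgebra ℤ L :=
  O ⊓ K.toSubalgebra.restrictScalars ℤ ⊓ integralClosure ℤ L

variable {O : Subalgebra ℤ L} (hOint : ∀ x ∈ O, IsIntegral ℤ x) {K : IntermediateField ℚ L}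
include hOint

theorem mem_restrictOrder {x : L} (hxO : x ∈ O) (hxK : x ∈ K) : x ∈ restrictOrder O K :=
  ⟨⟨hxO, hxK⟩, hOint x hxO⟩

theorem exists_eq_div_restrictOrder (hOfrac : ∀ x : L, ∃ a ∈ O, ∃ b ∈ O, b ≠ 0 ∧ x = a / b)
    {x : L} (hx : x ∈ K) :
    ∃ a ∈ restrictOrder O K, ∃ b ∈ restrictOrder O K, b ≠ 0 ∧ x = a / b := by
  obtain ⟨a, ha, b, hb, hb0, rfl⟩ := hOfrac x
  obtain ⟨c, hc0, s, hs, hcbs⟩ := exists_intCast_eq_mul_of_isIntegral (hOint b hb) hb0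
  have hsO : s ∈ O := Algebra.adjoin_le (Set.singleton_subset_iff.2 hb) hs
  have hc : (c : L) ≠ 0 := Int.cast_ne_zero.2 hc0
  have hxc : a / b * c = a * s := by
    rw [hcbs]
    field_simp
  refine ⟨a * s, mem_restrictOrder hOint (O.mul_mem ha hsO) (hxc ▸ K.mul_mem hx (K.intCast_mem c)),
    c, mem_restrictOrder hOint (O.intCast_mem c) (K.intCast_mem c), hc, ?_⟩
  rw [← hxc]
  field_simp

end Order

theorem mic_lattice_defined_over_number_field_general
    (L : Type*) [Field L] [CharZero L] [Algebra.IsAlgebraic ℚ L]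
    -- O is an order in L: a subring of the algebraic integers of L with fraction field L
    (O : Subalgebra ℤ L)
    (hOint : ∀ x ∈ O, IsIntegral ℤ x)
    (hOfrac : ∀ x : L, ∃ a ∈ O, ∃ b ∈ O, b ≠ 0 ∧ x = a / b)
    (n : ℕ)
    (f : MvPolynomial (Fin n) L)
    (Λ : Submodule O (Fin n → L)) (hΛ : Λ.FG)
    (hfΛ : ∀ v ∈ Λ, eval v f ∈ O) :
    -- there is a number field K ⊆ L ...
    ∃ K : IntermediateField ℚ L, FiniteDimensional ℚ K ∧
      -- ... such that, with R = O ∩ O_K (the elements of O lying in K and integral over ℤ),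
      -- the fraction field of R is K, ...
      (∀ x : L, x ∈ K →
        ∃ a ∈ O ⊓ Subalgebra.restrictScalars ℤ K.toSubalgebra ⊓ integralClosure ℤ L,
          ∃ b ∈ O ⊓ Subalgebra.restrictScalars ℤ K.toSubalgebra ⊓ integralClosure ℤ L,
            b ≠ 0 ∧ x = a / b) ∧
      -- ... and a finitely generated R-submodule Λ₀ ⊆ Λ on which f takes values in R
      -- and whose O-span is Λ
      ∃ Λ₀ : Submodule (O ⊓ Subalgebra.restrictScalars ℤ K.toSubalgebra ⊓
          integralClosure ℤ L : Subalgebra ℤ L) (Fin n → L),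
        Λ₀.FG ∧
        (Λ₀ : Set (Fin n → L)) ⊆ (Λ : Set (Fin n → L)) ∧
        (∀ w ∈ Λ₀, eval w f ∈
          O ⊓ Subalgebra.restrictScalars ℤ K.toSubalgebra ⊓ integralClosure ℤ L) ∧
        Submodule.span O (Λ₀ : Set (Fin n → L)) = Λ := by
  obtain ⟨k, v, rfl⟩ := Submodule.fg_iff_exists_fin_generating_family.1 hΛ
  let K := IntermediateField.adjoin ℚ ((f.compLinearCombination v).coeffs : Set L)
  have hK : FiniteDimensional ℚ K :=
    IntermediateField.finiteDimensional_adjoin fun x _ => Algebra.IsIntegral.isIntegral x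
  let Λ₀ := Submodule.span (restrictOrder O K) (Set.range v)
  have hΛ₀ : (Λ₀ : Set (Fin n → L)) ⊆ Submodule.span O (Set.range v) :=
    Submodule.span_subset_span_of_subalgebra_le (inf_le_left.trans inf_le_left) _
  refine ⟨K, hK, fun x hx => exists_eq_div_restrictOrder hOint hOfrac hx, Λ₀,
    Submodule.fg_span (Set.finite_range v), hΛ₀, fun w hw => ?_, ?_⟩
  · obtain ⟨c, rfl⟩ := (Submodule.mem_span_range_iff_exists_fun _).1 hw
    exact mem_restrictOrder hOint (hfΛ _ (hΛ₀ hw))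
      (eval_sum_smul_mem_adjoin_coeffs f v fun i => (c i).2.1.2)
  · exact le_antisymm (Submodule.span_le.2 hΛ₀) (Submodule.span_mono Submodule.subset_span)

theorem mic_lattice_defined_over_number_field
    (L : Type*) [Field L] [CharZero L] [Algebra.IsAlgebraic ℚ L]
    -- O is an order in L: a subring of the algebraic integers of L with fraction field L
    (O : Subalgebra ℤ L)
    (hOint : ∀ x ∈ O, IsIntegral ℤ x)
    (hOfrac : ∀ x : L, ∃ a ∈ O, ∃ b ∈ O, b ≠ 0 ∧ x = a / b)
    (n m : ℕ) (hn : 1 ≤ n) (hm : 2 ≤ m)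
    (f : MvPolynomial (Fin n) L) (hf : f.IsHomogeneous m)
    (Λ : Submodule O (Fin n → L)) (hΛ : Λ.FG)
    (hfΛ : ∀ v ∈ Λ, eval v f ∈ O) :
    -- there is a number field K ⊆ L ...
    ∃ K : IntermediateField ℚ L, FiniteDimensional ℚ K ∧
      -- ... such that, with R = O ∩ O_K (the elements of O lying in K and integral over ℤ),
      -- the fraction field of R is K, ...
      (∀ x : L, x ∈ K →
        ∃ a ∈ O ⊓ Subalgebra.restrictScalars ℤ K.toSubalgebra ⊓ integralClosure ℤ L,
          ∃ b ∈ O ⊓ Subalgebra.restrictScalars ℤ K.toSubalgebra ⊓ integralClosure ℤ L,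
            b ≠ 0 ∧ x = a / b) ∧
      -- ... and a finitely generated R-submodule Λ₀ ⊆ Λ on which f takes values in R
      -- and whose O-span is Λ
      ∃ Λ₀ : Submodule (O ⊓ Subalgebra.restrictScalars ℤ K.toSubalgebra ⊓
          integralClosure ℤ L : Subalgebra ℤ L) (Fin n → L),
        Λ₀.FG ∧
        (Λ₀ : Set (Fin n → L)) ⊆ (Λ : Set (Fin n → L)) ∧
        (∀ w ∈ Λ₀, eval w f ∈
          O ⊓ Subalgebra.restrictScalars ℤ K.toSubalgebra ⊓ integralClosure ℤ L) ∧
        Submodule.span O (Λ₀ : Set (Fin n → L)) = Λ :=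
  mic_lattice_defined_over_number_field_general L O hOint hOfrac n f Λ hΛ hfΛ
end

section
/- Let m ≥ 2 be an even integer and K a totally real number field of degree d = [K:ℚ] with discriminant Δ. For every totally positive algebraic integer α ∈ O_K with N_{K/ℚ}(α) > Δ^{m/2}, there exists a nonzero β ∈ O_K such that α − β^m is totally positive. -/
/-!
Minkowski's convex body theorem, applied to the box `|σ β| < (σ α)^(1/m)` in the Minkowski
space of the totally real field `K`, gives a nonzero `β ∈ 𝓞 K` as soon as the box volume
`2^d N(α)^(1/m)` exceeds `2^d √Δ`, i.e. as soon as `N(α) > Δ^(m/2)`. Since `m` is even,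
`σ (β^m) = |σ β|^m < σ α` for every embedding `σ`.
-/

open NumberField

open NumberField.InfinitePlace NumberField.mixedEmbedding NNReal

namespace NumberField

variable {K : Type*} [Field K]

theorem isTotallyReal_of_forall_im_eq_zero (hK : ∀ σ : K →+* ℂ, ∀ x : K, (σ x).im = 0) :
    IsTotallyReal K where
  isReal w := by
    rw [← mk_embedding w]
    exact isReal_mk_iff.mpr <| ComplexEmbedding.isReal_iff.mpr <|
      RingHom.ext fun x => Complex.conj_eq_iff_im.mpr (hK _ x)

theorem re_apply_sub_pow_pos {σ : K →+* ℂ} (hσ : ∀ x, (σ x).im = 0) {m : ℕ} (hm : Even m)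
    {α β : K} (hα : 0 < (σ α).re) (h : InfinitePlace.mk σ β ^ m < InfinitePlace.mk σ α) :
    0 < (σ (α - β ^ m)).re := by
  have hβ : σ β = ((σ β).re : ℂ) := Complex.ext rfl (by simp [hσ β])
  rw [apply, apply, ← Complex.abs_re_eq_norm.mpr (hσ _), ← Complex.abs_re_eq_norm.mpr (hσ _),
    abs_of_pos hα, hm.pow_abs] at h
  rwa [map_sub, map_pow, hβ, Complex.sub_re, ← Complex.ofReal_pow, Complex.ofReal_re, sub_pos]

variable [NumberField K] [IsTotallyReal K]

theorem discr_pos_of_isTotallyReal : 0 < discr K := by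
  have h := sign_discr K
  rwa [IsTotallyReal.nrComplexPlaces_eq_zero, pow_zero, Int.sign_eq_one_iff_pos] at h

open scoped Classical in
theorem exists_ne_zero_forall_lt_of_sqrt_abs_discr_lt_prod {f : InfinitePlace K → ℝ≥0}
    (h : √|(discr K : ℝ)| < ∏ w, (f w : ℝ)) :
    ∃ β : 𝓞 K, β ≠ 0 ∧ ∀ w, w β < f w := by
  refine exists_ne_zero_mem_ringOfIntegers_lt K ?_
  rw [convexBodyLT_volume, minkowskiBound, volume_fundamentalDomain_fractionalIdealLatticeBasis,
    volume_fundamentalDomain_latticeBasis, mixedEmbedding.finrank, Units.val_one,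
    FractionalIdeal.absNorm_one]
  simp only [IsTotallyReal.mult_eq, pow_one, IsTotallyReal.nrComplexPlaces_eq_zero, pow_zero,
    convexBodyLTFactor, mul_one, Rat.cast_one, ENNReal.ofReal_one, one_mul,
    IsTotallyReal.finrank K]
  rw [mul_comm]
  norm_cast
  gcongr
  rw [← NNReal.coe_lt_coe]
  simpa [Int.norm_eq_abs] using h

theorem exists_ne_zero_forall_pow_lt {m : ℕ} (hm : m ≠ 0) {α : K}
    (h : √|(discr K : ℝ)| ^ m < |(Algebra.norm ℚ α : ℝ)|) :
    ∃ β : 𝓞 K, β ≠ 0 ∧ ∀ w : InfinitePlace K, w β ^ m < w α := by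
  have hm' : (0 : ℝ) < m := by positivity
  let f : InfinitePlace K → ℝ≥0 := fun w => ⟨w α ^ (m : ℝ)⁻¹, by positivity⟩
  have hprod : ∏ w, (f w : ℝ) = |(Algebra.norm ℚ α : ℝ)| ^ (m : ℝ)⁻¹ := by
    have h_norm := prod_eq_abs_norm α
    simp only [IsTotallyReal.mult_eq, pow_one] at h_norm
    rw [← Rat.cast_abs, ← h_norm, ← Real.finsetProd_rpow _ _ fun w _ => apply_nonneg w α]
    rfl
  obtain ⟨β, hβ, hlt⟩ := exists_ne_zero_forall_lt_of_sqrt_abs_discr_lt_prod (f := f) <| by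
    rwa [hprod, Real.lt_rpow_inv_iff_of_pos (by positivity) (abs_nonneg _) hm', Real.rpow_natCast]
  refine ⟨β, hβ, fun w => ?_⟩
  have := hlt w
  rwa [← Real.rpow_natCast,
    ← Real.lt_rpow_inv_iff_of_pos (apply_nonneg w _) (apply_nonneg w α) hm']

end NumberField

theorem exists_mth_power_below
    (m : ℕ) (hm : 2 ≤ m) (hme : Even m)
    (K : Type*) [Field K] [NumberField K]
    -- K is totally real
    (hK : ∀ σ : K →+* ℂ, ∀ x : K, (σ x).im = 0)
    (α : 𝓞 K)
    -- α is totally positive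
    (hαpos : ∀ σ : K →+* ℂ, 0 < (σ (α : K)).re)
    -- N_{K/ℚ}(α) > Δ^{m/2}
    (hnorm : ((discr K : ℚ)) ^ (m / 2) < Algebra.norm ℚ (α : K)) :
    ∃ β : 𝓞 K, β ≠ 0 ∧
      ∀ σ : K →+* ℂ, 0 < (σ ((α : K) - (β : K) ^ m)).re := by
  have := isTotallyReal_of_forall_im_eq_zero hK
  have hΔ : √|(discr K : ℝ)| ^ m = (discr K : ℝ) ^ (m / 2) := by
    rw [← Nat.two_mul_div_two_of_even hme, pow_mul, Real.sq_sqrt (abs_nonneg _),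
      abs_of_pos (by exact_mod_cast discr_pos_of_isTotallyReal), Nat.mul_div_cancel_left _ two_pos]
  have hnorm' : √|(discr K : ℝ)| ^ m < |(Algebra.norm ℚ (α : K) : ℝ)| := by
    rw [hΔ]
    exact lt_of_lt_of_le (by exact_mod_cast hnorm) (le_abs_self _)
  obtain ⟨β, hβ, hlt⟩ := exists_ne_zero_forall_pow_lt (by omega) hnorm'
  exact ⟨β, hβ, fun σ => re_apply_sub_pow_pos (hK σ) hme (hαpos σ) (hlt _)⟩
end

section
/- Let n ≥ 1 and let m ≥ 2 be even, K a totally real number field, O an order in K, and f ∈ K[x₁,…,xₙ] a totally positive definite homogeneous polynomial of degree m. Then there exists a positive integer C such that for every nonzero vector v = (γ₁,…,γₙ) ∈ Oⁿ, the element C·f(v) − (γ₁² + γ₂² + ⋯ + γₙ²)^{m/2} of K is totally positive. -/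
/-!
At each real embedding `τ` the form `τ f` is positive definite and homogeneous of degree `m = 2k`,
so by compactness of the unit sphere it is bounded below by `c_τ ‖x‖ ^ m` with `c_τ > 0`, while
`(∑ xᵢ²) ^ k ≤ n ^ k ‖x‖ ^ m`. Hence every large enough integer `C` works for `τ`, and since there
are finitely many embeddings, all of which are real, some `C` works for all of them at once.
-/

open MvPolynomial Filter

theorem MvPolynomial.IsHomogeneous.eval_smul {R ι : Type*} [CommSemiring R]
    {φ : MvPolynomial ι R} {m : ℕ} (hφ : φ.IsHomogeneous m) (t : R) (x : ι → R) :
    eval (t • x) φ = t ^ m * eval x φ := by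
  rw [eval_eq, eval_eq, Finset.mul_sum]
  refine Finset.sum_congr rfl fun d hd => ?_
  have hdeg : ∑ i ∈ d.support, d i = m := by
    rw [← hφ (mem_support_iff.mp hd)]
    simp [Finsupp.weight_apply, Finsupp.sum]
  simp only [Pi.smul_apply, smul_eq_mul, mul_pow, Finset.prod_mul_distrib,
    Finset.prod_pow_eq_pow_sum, hdeg]
  ring

theorem MvPolynomial.IsHomogeneous.exists_pos_mul_norm_pow_le_eval {ι : Type*} [Fintype ι]
    {φ : MvPolynomial ι ℝ} {m : ℕ} (hφ : φ.IsHomogeneous m)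
    (hpos : ∀ x : ι → ℝ, x ≠ 0 → 0 < eval x φ) :
    ∃ c > 0, ∀ x : ι → ℝ, x ≠ 0 → c * ‖x‖ ^ m ≤ eval x φ := by
  rcases isEmpty_or_nonempty ι with hι | hι
  · exact ⟨1, one_pos, fun x hx => absurd (Subsingleton.elim x 0) hx⟩
  obtain ⟨u, hu, hmin⟩ := (isCompact_sphere (0 : ι → ℝ) 1).exists_isMinOn
    (NormedSpace.sphere_nonempty.mpr zero_le_one) (continuous_eval φ).continuousOn
  refine ⟨eval u φ, hpos u (ne_zero_of_mem_unit_sphere ⟨u, hu⟩), fun x hx => ?_⟩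
  have hx' : 0 < ‖x‖ := norm_pos_iff.mpr hx
  have hxS : ‖x‖⁻¹ • x ∈ Metric.sphere (0 : ι → ℝ) 1 := by
    simp [norm_smul, hx'.ne']
  calc eval u φ * ‖x‖ ^ m ≤ eval (‖x‖⁻¹ • x) φ * ‖x‖ ^ m :=
        mul_le_mul_of_nonneg_right (hmin hxS) (by positivity)
    _ = eval x φ := by
        rw [hφ.eval_smul, mul_comm, ← mul_assoc, ← mul_pow, mul_inv_cancel₀ hx'.ne', one_pow,
          one_mul]

theorem sum_sq_le_card_mul_norm_sq {ι : Type*} [Fintype ι] (x : ι → ℝ) :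
    ∑ i, x i ^ 2 ≤ Fintype.card ι * ‖x‖ ^ 2 := by
  calc ∑ i, x i ^ 2 ≤ ∑ _i : ι, ‖x‖ ^ 2 := Finset.sum_le_sum fun i _ => by
        rw [← sq_abs, ← Real.norm_eq_abs]
        exact pow_le_pow_left₀ (norm_nonneg _) (norm_le_pi_norm x i) 2
    _ = Fintype.card ι * ‖x‖ ^ 2 := by simp

theorem MvPolynomial.IsHomogeneous.eventually_sum_sq_pow_lt_natCast_mul_eval {ι : Type*}
    [Fintype ι] {φ : MvPolynomial ι ℝ} {k : ℕ} (hφ : φ.IsHomogeneous (2 * k))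
    (hpos : ∀ x : ι → ℝ, x ≠ 0 → 0 < eval x φ) :
    ∀ᶠ C : ℕ in atTop, ∀ x : ι → ℝ, x ≠ 0 → (∑ i, x i ^ 2) ^ k < C * eval x φ := by
  obtain ⟨c, hc, hlow⟩ := hφ.exists_pos_mul_norm_pow_le_eval hpos
  filter_upwards [tendsto_natCast_atTop_atTop.eventually_gt_atTop
    ((Fintype.card ι : ℝ) ^ k / c)] with C hC x hx
  have hx' : 0 < ‖x‖ := norm_pos_iff.mpr hx
  calc (∑ i, x i ^ 2) ^ k ≤ (Fintype.card ι * ‖x‖ ^ 2) ^ k :=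
        pow_le_pow_left₀ (by positivity) (sum_sq_le_card_mul_norm_sq x) k
    _ = (Fintype.card ι : ℝ) ^ k / c * (c * ‖x‖ ^ (2 * k)) := by
        field_simp
        ring
    _ < C * (c * ‖x‖ ^ (2 * k)) := mul_lt_mul_of_pos_right hC (by positivity)
    _ ≤ C * eval x φ := mul_le_mul_of_nonneg_left (hlow x hx) C.cast_nonneg

theorem NumberField.ComplexEmbedding.isReal_of_forall_im_eq_zero {K : Type*} [Field K]
    {σ : K →+* ℂ} (h : ∀ x, (σ x).im = 0) : IsReal σ := by
  rw [isReal_iff]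
  ext x
  exact Complex.conj_eq_iff_im.mpr (h x)

theorem totally_positive_definite_lower_bound_general
    (n m : ℕ) (hme : Even m)
    (K : Type*) [Field K] [NumberField K]
    -- K is totally real
    (hK : ∀ σ : K →+* ℂ, ∀ x : K, (σ x).im = 0)
    -- O is an order in K
    (O : Subalgebra ℤ K)
    (f : MvPolynomial (Fin n) K) (hf : f.IsHomogeneous m)
    -- f is totally positive definite
    (hpd : ∀ σ : K →+* ℝ, ∀ x : Fin n → ℝ, x ≠ 0 → 0 < eval x (map σ f)) :
    ∃ C : ℕ, 0 < C ∧
      ∀ v : Fin n → K, (∀ i, v i ∈ O) → v ≠ 0 →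
        -- C·f(v) − (γ₁² + ⋯ + γₙ²)^{ m/2 } is totally positive
        ∀ σ : K →+* ℂ,
          0 < (σ ((C : K) * eval v f - (∑ i, v i ^ 2) ^ (m / 2))).re := by
  obtain ⟨k, rfl⟩ := hme
  have hk : (k + k) / 2 = k := by omega
  have hfτ (τ : K →+* ℝ) : (map τ f).IsHomogeneous (2 * k) := two_mul k ▸ hf.map τ
  obtain ⟨C, hC, hCpos⟩ := ((eventually_all.mpr fun τ =>
    (hfτ τ).eventually_sum_sq_pow_lt_natCast_mul_eval (hpd τ)).and (eventually_gt_atTop 0)).exists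
  refine ⟨C, hCpos, fun v _ hv σ => ?_⟩
  have hσ := NumberField.ComplexEmbedding.isReal_of_forall_im_eq_zero (hK σ)
  have hτv : hσ.embedding ∘ v ≠ 0 := fun h =>
    hv (funext fun i => hσ.embedding.injective (by simpa using congrFun h i))
  rw [← hσ.coe_embedding_apply, Complex.ofReal_re, hk, map_sub, map_mul, map_natCast, map_pow,
    map_sum, map_eval, sub_pos]
  simpa using hC hσ.embedding _ hτv

theorem totally_positive_definite_lower_bound
    (n m : ℕ) (hn : 1 ≤ n) (hm : 2 ≤ m) (hme : Even m)
    (K : Type*) [Field K] [NumberField K]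
    -- K is totally real
    (hK : ∀ σ : K →+* ℂ, ∀ x : K, (σ x).im = 0)
    -- O is an order in K
    (O : Subalgebra ℤ K)
    (hOint : ∀ x ∈ O, IsIntegral ℤ x)
    (hOfrac : ∀ x : K, ∃ a ∈ O, ∃ b ∈ O, b ≠ 0 ∧ x = a / b)
    (f : MvPolynomial (Fin n) K) (hf : f.IsHomogeneous m)
    -- f is totally positive definite
    (hpd : ∀ σ : K →+* ℝ, ∀ x : Fin n → ℝ, x ≠ 0 → 0 < eval x (map σ f)) :
    ∃ C : ℕ, 0 < C ∧
      ∀ v : Fin n → K, (∀ i, v i ∈ O) → v ≠ 0 →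
        -- C·f(v) − (γ₁² + ⋯ + γₙ²)^{ m/2 } is totally positive
        ∀ σ : K →+* ℂ,
          0 < (σ ((C : K) * eval v f - (∑ i, v i ^ 2) ^ (m / 2))).re :=
  totally_positive_definite_lower_bound_general n m hme K hK O f hf hpd
end

section
/- Let n ≥ 1, let m ≥ 2 be even, let K be a totally real algebraic extension of ℚ (possibly of infinite degree), let O be an order in K, let f ∈ K[x₁,…,xₙ] be a totally positive definite homogeneous polynomial of degree m, and let Λ ⊆ Kⁿ be a finitely generated O-submodule. Then there exists a positive integer κ such that for every v ∈ Λ one has house(v)^m ≤ κ · house(f(v)). -/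
open MvPolynomial

/-- The house of an algebraic number `α`: the maximum of `|σ(α)|` over the
embeddings `σ` into `ℂ` (for an element of a field `K` of algebraic numbers, the
embeddings of `K` restrict to exactly the embeddings of `ℚ(α)`, giving the same
set of values). -/
noncomputable def house' {K : Type*} [Field K] (α : K) : ℝ :=
  ⨆ σ : K →+* ℂ, ‖σ α‖

/-!
Since `K` is totally real, every complex embedding `σ` of `K` comes from a real embedding `τ`,
and `τ(f)` is a positive definite form; by homogeneity and compactness of the unit sphere,
`‖τ(v)‖ ^ m ≤ C · τ(f)(τ(v)) = C · τ(f(v)) ≤ C · house(f(v))`. The constant `C` can be chosen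
independently of `τ` because there are only finitely many conjugate forms `τ(f)`: each
coefficient of `f` is sent to a root of its minimal polynomial over `ℚ`.
-/

open Filter NumberField.ComplexEmbedding

theorem Real.iSup_pow_le {ι : Sort*} {f : ι → ℝ} {m : ℕ} {R : ℝ} (hm : m ≠ 0) (hR : 0 ≤ R)
    (hf : ∀ i, 0 ≤ f i) (h : ∀ i, f i ^ m ≤ R) : (⨆ i, f i) ^ m ≤ R := by
  have hm' : (0 : ℝ) < m := by positivity
  have hroot : ∀ i, f i ≤ R ^ (m : ℝ)⁻¹ := fun i =>
    (Real.le_rpow_inv_iff_of_pos (hf i) hR hm').2 (by rw [Real.rpow_natCast]; exact h i)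
  calc (⨆ i, f i) ^ m ≤ (R ^ (m : ℝ)⁻¹) ^ m :=
        pow_le_pow_left₀ (Real.iSup_nonneg hf) (Real.iSup_le hroot (by positivity)) m
    _ = R := Real.rpow_inv_natCast_pow hR hm

namespace MvPolynomial.IsHomogeneous

variable {ι : Type*} {m : ℕ}

theorem eval_smul_s9 {R : Type*} [CommSemiring R] {p : MvPolynomial ι R} (hp : p.IsHomogeneous m)
    (c : R) (x : ι → R) : eval (c • x) p = c ^ m * eval x p := by
  rw [eval_eq, eval_eq, Finset.mul_sum]
  refine Finset.sum_congr rfl fun d hd => ?_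
  have hdeg : ∑ i ∈ d.support, d i = m := by
    simpa [Finsupp.weight_apply, Finsupp.sum] using hp (mem_support_iff.mp hd)
  simp only [Pi.smul_apply, smul_eq_mul, mul_pow, Finset.prod_mul_distrib,
    Finset.prod_pow_eq_pow_sum, hdeg]
  ring

variable [Fintype ι] {p : MvPolynomial ι ℝ}

theorem exists_pos_mul_norm_pow_le_eval_s9 (hp : p.IsHomogeneous m) (hm : m ≠ 0)
    (hpos : ∀ x : ι → ℝ, x ≠ 0 → 0 < eval x p) :
    ∃ ε > 0, ∀ x : ι → ℝ, ε * ‖x‖ ^ m ≤ eval x p := by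
  obtain ⟨ε, hε, hεle⟩ := (isCompact_sphere (0 : ι → ℝ) 1).exists_forall_le'
    (continuous_eval p).continuousOn fun x hx => hpos x (Metric.ne_of_mem_sphere hx one_ne_zero)
  refine ⟨ε, hε, fun x => ?_⟩
  rcases eq_or_ne x 0 with rfl | hx
  · have h0 := hp.eval_smul_s9 0 (0 : ι → ℝ)
    simp only [smul_zero, zero_pow hm, zero_mul] at h0
    rw [norm_zero, zero_pow hm, mul_zero, h0]
  have hxn : 0 < ‖x‖ := norm_pos_iff.2 hx
  calc ε * ‖x‖ ^ m ≤ eval (‖x‖⁻¹ • x) p * ‖x‖ ^ m := by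
        gcongr
        exact hεle _ (by simp [norm_smul, hxn.ne'])
    _ = eval x p := by
        rw [hp.eval_smul_s9, inv_pow, mul_right_comm, inv_mul_cancel₀ (by positivity), one_mul]

theorem eventually_norm_pow_le_mul_eval (hp : p.IsHomogeneous m) (hm : m ≠ 0)
    (hpos : ∀ x : ι → ℝ, x ≠ 0 → 0 < eval x p) :
    ∀ᶠ C : ℕ in atTop, ∀ x : ι → ℝ, ‖x‖ ^ m ≤ C * eval x p := by
  obtain ⟨ε, hε, hbound⟩ := hp.exists_pos_mul_norm_pow_le_eval_s9 hm hpos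
  filter_upwards [(tendsto_natCast_atTop_atTop (R := ℝ)).eventually_ge_atTop ε⁻¹] with C hC x
  have heval : 0 ≤ eval x p := (by positivity : 0 ≤ ε * ‖x‖ ^ m).trans (hbound x)
  calc ‖x‖ ^ m ≤ ε⁻¹ * eval x p := (le_inv_mul_iff₀ hε).2 (hbound x)
    _ ≤ C * eval x p := by gcongr

end MvPolynomial.IsHomogeneous

theorem house'_nonneg {K : Type*} [Field K] (α : K) : 0 ≤ house' α :=
  Real.iSup_nonneg fun _ => norm_nonneg _

theorem exists_ringHom_real_norm_eq_abs {K : Type*} [Field K] {σ : K →+* ℂ}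
    (hσ : ∀ x, (σ x).im = 0) : ∃ τ : K →+* ℝ, ∀ x, ‖σ x‖ = |τ x| := by
  have hreal : IsReal σ := isReal_iff.2 <| RingHom.ext fun x => Complex.conj_eq_iff_im.2 (hσ x)
  refine ⟨hreal.embedding, fun x => ?_⟩
  rw [← hreal.coe_embedding_apply, Complex.norm_real, Real.norm_eq_abs]

section Conjugates

variable {K L : Type*} [Field K] [CharZero K] [Algebra.IsAlgebraic ℚ K] [Field L] [CharZero L]

theorem map_mem_rootSet_minpoly (φ : K →+* L) (α : K) : φ α ∈ (minpoly ℚ α).rootSet L :=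
  Polynomial.mem_rootSet.2 ⟨minpoly.ne_zero (Algebra.IsAlgebraic.isAlgebraic α).isIntegral,
    minpoly.aeval_algHom _ φ.toRatAlgHom α⟩

theorem finite_range_apply (α : K) : (Set.range fun φ : K →+* L => φ α).Finite :=
  ((minpoly ℚ α).rootSet_finite L).subset <| Set.range_subset_iff.2 (map_mem_rootSet_minpoly · α)

theorem finite_range_map {ι : Type*} (f : MvPolynomial ι K) :
    (Set.range fun φ : K →+* L => map φ f).Finite := by
  refine Set.Finite.of_finite_image (f := fun p (d : f.support) => coeff d p) ?_ ?_
  · rw [← Set.range_comp]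
    refine (Set.Finite.pi' fun d => finite_range_apply (L := L) (coeff d.1 f)).subset ?_
    rintro _ ⟨φ, rfl⟩ d
    exact ⟨φ, by simp [coeff_map]⟩
  · rintro _ ⟨φ, rfl⟩ _ ⟨ψ, rfl⟩ h
    ext d
    by_cases hd : d ∈ f.support
    · simpa [coeff_map] using congrFun h ⟨d, hd⟩
    · simp [coeff_map, notMem_support_iff.1 hd]

theorem norm_le_house' (φ : K →+* ℂ) (α : K) : ‖φ α‖ ≤ house' α :=
  le_ciSup (Set.range_comp norm (fun ψ : K →+* ℂ => ψ α) ▸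
    (finite_range_apply α).image norm).bddAbove φ

end Conjugates

theorem house_pow_le_mul_house_infinite_general
    (n m : ℕ) (hm : 2 ≤ m)
    -- K is a totally real algebraic extension of ℚ
    (K : Type*) [Field K] [CharZero K] [Algebra.IsAlgebraic ℚ K]
    (hK : ∀ σ : K →+* ℂ, ∀ x : K, (σ x).im = 0)
    (O : Subalgebra ℤ K)
    (f : MvPolynomial (Fin n) K) (hf : f.IsHomogeneous m)
    -- f is totally positive definite
    (hpd : ∀ σ : K →+* ℝ, ∀ x : Fin n → ℝ, x ≠ 0 → 0 < eval x (map σ f))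
    (Λ : Submodule O (Fin n → K)) :
    ∃ κ : ℕ, 0 < κ ∧
      ∀ v ∈ Λ, (⨆ i, house' (v i)) ^ m ≤ (κ : ℝ) * house' (eval v f) := by
  have hm0 : m ≠ 0 := by omega
  have hbound : ∀ᶠ C : ℕ in atTop, ∀ p ∈ Set.range fun τ : K →+* ℝ => map τ f,
      ∀ x : Fin n → ℝ, ‖x‖ ^ m ≤ C * eval x p := by
    refine (eventually_all_finite (finite_range_map f)).2 ?_
    rintro _ ⟨τ, rfl⟩
    exact (hf.map τ).eventually_norm_pow_le_mul_eval hm0 (hpd τ)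
  obtain ⟨κ, hκ, hκpos⟩ := (hbound.and (eventually_gt_atTop 0)).exists
  refine ⟨κ, hκpos, fun v _ => ?_⟩
  have hR : 0 ≤ (κ : ℝ) * house' (eval v f) := mul_nonneg κ.cast_nonneg (house'_nonneg _)
  refine Real.iSup_pow_le hm0 hR (fun _ => house'_nonneg _) fun i =>
    Real.iSup_pow_le hm0 hR (fun _ => norm_nonneg _) fun σ => ?_
  obtain ⟨τ, hnorm⟩ := exists_ringHom_real_norm_eq_abs (hK σ)
  calc ‖σ (v i)‖ ^ m = ‖τ (v i)‖ ^ m := by rw [hnorm, Real.norm_eq_abs]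
    _ ≤ ‖fun j => τ (v j)‖ ^ m := by gcongr; exact norm_le_pi_norm (fun j => τ (v j)) i
    _ ≤ κ * eval (fun j => τ (v j)) (map τ f) := hκ _ ⟨τ, rfl⟩ _
    _ = κ * τ (eval v f) := by rw [eval_map, eval₂_comp]; rfl
    _ ≤ κ * house' (eval v f) := by
        gcongr
        exact (le_abs_self _).trans ((hnorm _).symm.trans_le (norm_le_house' σ _))

theorem house_pow_le_mul_house_infinite
    (n m : ℕ) (hn : 1 ≤ n) (hm : 2 ≤ m) (hme : Even m)
    -- K is a totally real algebraic extension of ℚ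
    (K : Type*) [Field K] [CharZero K] [Algebra.IsAlgebraic ℚ K]
    (hK : ∀ σ : K →+* ℂ, ∀ x : K, (σ x).im = 0)
    -- O is an order in K
    (O : Subalgebra ℤ K)
    (hOint : ∀ x ∈ O, IsIntegral ℤ x)
    (hOfrac : ∀ x : K, ∃ a ∈ O, ∃ b ∈ O, b ≠ 0 ∧ x = a / b)
    (f : MvPolynomial (Fin n) K) (hf : f.IsHomogeneous m)
    -- f is totally positive definite
    (hpd : ∀ σ : K →+* ℝ, ∀ x : Fin n → ℝ, x ≠ 0 → 0 < eval x (map σ f))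
    (Λ : Submodule O (Fin n → K)) (hΛ : Λ.FG) :
    ∃ κ : ℕ, 0 < κ ∧
      ∀ v ∈ Λ, (⨆ i, house' (v i)) ^ m ≤ (κ : ℝ) * house' (eval v f) :=
  house_pow_le_mul_house_infinite_general n m hm K hK O f hf hpd Λ
end
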